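/- In an ADMG, let X_i be a vertex and S a set of vertices not containing X_i. Partition S into S_1 = {X_k ∈ S : S \ {X_k} unblocks some back-door path from X_k to X_i} and S_2 = S \ S_1. Then for any X_p ∈ S_1, X_q ∈ S_2, and X_l ∈ V \ S, there is no configuration consisting of a directed path from X_l to X_q unblocked by S_1 together with a directed path from X_l to X_p unblocked by S_2 (treks out of a common source connecting S_2 to S_1 avoiding S are impossible). -/

import Mathlib

open scoped Classical

/-- Orientation of an edge along a path. -/
inductive EdgeDir
  | fwd  -- a → b
  | bwd  -- a ← b
  | bi   -- a ↔ b
deriving DecidableEq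

/-- An acyclic directed mixed graph: directed and bidirected edges on a vertex set. -/
structure ADMG (V : Type) where
  dir : V → V → Prop
  bidir : V → V → Prop

namespace ADMG

variable {V : Type} (G : ADMG V)

/-- `StepOK d a b` : the step from `a` to `b` along a path realizes the edge type `d`. -/
def StepOK : EdgeDir → V → V → Prop
  | .fwd, a, b => G.dir a b
  | .bwd, a, b => G.dir b a
  | .bi,  a, b => G.bidir a b

/-- A path in a mixed graph: a list of distinct vertices together with the orientation of
each consecutive edge. -/
structure GPath where
  verts : List V
  dirs : List EdgeDir
  hlen : verts.length = dirs.length + 1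
  nodup : verts.Nodup
  ok : ∀ k (h : k < dirs.length),
    G.StepOK (dirs.get ⟨k, h⟩) (verts.get ⟨k, by omega⟩) (verts.get ⟨k + 1, by omega⟩)

variable {G}

/-- First vertex of a path. -/
def GPath.first (p : G.GPath) : V := p.verts.get ⟨0, by have := p.hlen; omega⟩

/-- Last vertex of a path. -/
def GPath.last (p : G.GPath) : V :=
  p.verts.get ⟨p.dirs.length, by have := p.hlen; omega⟩

/-- The vertex at position `k` is a collider (both adjacent edges point into it). -/
def GPath.ColliderAt (p : G.GPath) (k : ℕ) : Prop :=
  ∃ (hk : 0 < k) (h : k < p.dirs.length),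
    (p.dirs.get ⟨k - 1, by omega⟩ = .fwd ∨ p.dirs.get ⟨k - 1, by omega⟩ = .bi) ∧
    (p.dirs.get ⟨k, h⟩ = .bwd ∨ p.dirs.get ⟨k, h⟩ = .bi)

/-- `b` is a descendant of `a` (there is a directed path from `a` to `b`). -/
def Desc (G : ADMG V) (a b : V) : Prop := Relation.TransGen G.dir a b

/-- `Z` blocks a path: either `Z` contains an interior non-collider, or some collider on
the path is such that neither it nor any of its descendants belongs to `Z`. -/
def Blocks (Z : Set V) (p : G.GPath) : Prop :=
  (∃ k, ∃ _hk : 0 < k, ∃ h : k < p.dirs.length,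
      ¬ p.ColliderAt k ∧ p.verts.get ⟨k, by have := p.hlen; omega⟩ ∈ Z)
  ∨ (∃ k, ∃ h : k < p.dirs.length, p.ColliderAt k ∧
      p.verts.get ⟨k, by have := p.hlen; omega⟩ ∉ Z ∧
      ∀ d, Desc G (p.verts.get ⟨k, by have := p.hlen; omega⟩) d → d ∉ Z)

/-- The path runs from `a` to `b`. -/
def GPath.IsBetween (p : G.GPath) (a b : V) : Prop := p.first = a ∧ p.last = b

/-- A directed path from `a` to `b` (all edges oriented forward, nonempty). -/
def GPath.IsDirected (p : G.GPath) (a b : V) : Prop :=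
  p.first = a ∧ p.last = b ∧ p.dirs ≠ [] ∧
    ∀ k (h : k < p.dirs.length), p.dirs.get ⟨k, h⟩ = .fwd

/-- A back-door path from `a` to `b` (first edge points into `a` or is bidirected). -/
def GPath.IsBackdoor (p : G.GPath) (a b : V) : Prop :=
  p.first = a ∧ p.last = b ∧ ∃ h : 0 < p.dirs.length,
    (p.dirs.get ⟨0, h⟩ = .bwd ∨ p.dirs.get ⟨0, h⟩ = .bi)

/-- The path contains a v-structure. -/
def GPath.HasCollider (p : G.GPath) : Prop := ∃ k, p.ColliderAt k

/-- The selective-door criterion relative to `(j, i)`. -/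
def SelectiveDoor (G : ADMG V) (Z : Set V) (j i : V) : Prop :=
  (∀ k ∈ Z, Desc G j k →
      (∃ q : G.GPath, q.IsDirected j k ∧ ¬ Blocks ((Z ∪ {j}) \ {k}) q) →
      ∀ p : G.GPath, p.IsBackdoor k i → Blocks (Z \ {k}) p)
  ∧ (∀ p : G.GPath, p.IsBackdoor j i → Blocks Z p)

/-- The back-door criterion relative to `(j, i)`. -/
def BackdoorCrit (G : ADMG V) (Z : Set V) (j i : V) : Prop :=
  (∀ k ∈ Z, ¬ Desc G j k) ∧ ∀ p : G.GPath, p.IsBackdoor j i → Blocks Z p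

end ADMG

/-!
Let `w` and `u` be the first vertices of `S` on the branches towards `xq` and `xp`. Openness of the
branches gives `w ∉ S₁` and `u ∈ S₁`; we contradict the former by turning a back-door path `π` from
`u` to `i`, open given `S \ {u}`, into one from `w` open given `S \ {w}`. The only vertices that can
block `π` given `S \ {w}` are colliders whose way into `S \ {u}` passes through `w`. If there are
none, walk the trek `w ← ⋯ ← l → ⋯ → u` into `π`; otherwise walk a directed path from the last such
collider to `w` backwards into the rest of `π`. Entering `π` at its last vertex on the walk keeps
the result a path, and if `w` itself lies on the part of `π` used, it is a collider there and the
rest of `π` from `w` already does.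
-/

theorem List.exists_split_at_first {α : Type*} (P : α → Prop) {l : List α} (h : ∃ x ∈ l, P x) :
    ∃ l₁ x l₂, l = l₁ ++ x :: l₂ ∧ P x ∧ ∀ y ∈ l₁, ¬ P y := by
  induction l with
  | nil => simp at h
  | cons a l ih =>
    by_cases ha : P a
    · exact ⟨[], a, l, rfl, ha, by simp⟩
    · obtain ⟨l₁, x, l₂, rfl, hx, hl₁⟩ := ih (by simpa [ha] using h)
      exact ⟨a :: l₁, x, l₂, rfl, hx, by simpa [ha] using hl₁⟩

theorem List.exists_split_at_last {α : Type*} (P : α → Prop) {l : List α} (h : ∃ x ∈ l, P x) :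
    ∃ l₁ x l₂, l = l₁ ++ x :: l₂ ∧ P x ∧ ∀ y ∈ l₂, ¬ P y := by
  obtain ⟨l₁, x, l₂, hl, hx, hl₁⟩ := exists_split_at_first P (l := l.reverse) (by simpa using h)
  refine ⟨l₂.reverse, x, l₁.reverse, ?_, hx, by simpa using hl₁⟩
  simpa using congrArg reverse hl

theorem List.exists_nodup_isChain_of_reflTransGen {α : Type*} {r : α → α → Prop} {a b : α}
    (h : Relation.ReflTransGen r a b) :
    ∃ l : List α, (a :: l).IsChain r ∧ (a :: l).Nodup ∧ (a :: l).getLast? = some b := by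
  induction h using Relation.ReflTransGen.head_induction_on with
  | refl => exact ⟨[], by simp, by simp, rfl⟩
  | @head a c hac _ ih =>
    obtain ⟨l, hchain, hnodup, hlast⟩ := ih
    by_cases ha : a ∈ c :: l
    · obtain ⟨l₁, l₂, hsplit⟩ := append_of_mem ha
      rw [hsplit] at hchain hnodup hlast
      refine ⟨l₂, hchain.right_of_append, hnodup.sublist (sublist_append_right _ _), ?_⟩
      simpa using hlast
    · exact ⟨c :: l, isChain_cons_cons.2 ⟨hac, hchain⟩, nodup_cons.2 ⟨ha, hnodup⟩,
        by simpa using hlast⟩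

def EdgeDir.IsCollider (d₁ d₂ : EdgeDir) : Prop :=
  (d₁ = .fwd ∨ d₁ = .bi) ∧ (d₂ = .bwd ∨ d₂ = .bi)

theorem EdgeDir.not_isCollider_bwd_left (d : EdgeDir) : ¬ EdgeDir.IsCollider .bwd d := by
  simp [EdgeDir.IsCollider]

theorem EdgeDir.not_isCollider_self {d : EdgeDir} (hd : d ≠ .bi) : ¬ EdgeDir.IsCollider d d := by
  cases d <;> simp_all [EdgeDir.IsCollider]

namespace ADMG

variable {V : Type} {G : ADMG V}

variable (G) in
def ancestors (Z : Set V) : Set V := {v | v ∈ Z ∨ ∃ z ∈ Z, G.Desc v z}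

theorem mem_ancestors_of_reflTransGen {Z : Set V} {v x : V}
    (hvx : Relation.ReflTransGen G.dir v x) (hx : x ∈ G.ancestors Z) : v ∈ G.ancestors Z := by
  rcases Relation.reflTransGen_iff_eq_or_transGen.1 hvx with rfl | hvx
  · exact hx
  · rcases hx with hx | ⟨z, hz, hxz⟩
    · exact Or.inr ⟨x, hx, hvx⟩
    · exact Or.inr ⟨z, hz, hvx.trans hxz⟩

theorem reflTransGen_of_mem_ancestors {Y Z : Set V} {v w : V} (hYZ : Y ⊆ insert w Z)
    (hv : v ∈ G.ancestors Y) (hvZ : v ∉ G.ancestors Z) : Relation.ReflTransGen G.dir v w := by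
  rcases hv with hv | ⟨z, hz, hvz⟩
  · rcases hYZ hv with rfl | hv
    · exact .refl
    · exact absurd (Or.inl hv) hvZ
  · rcases hYZ hz with rfl | hz
    · exact hvz.to_reflTransGen
    · exact absurd (Or.inr ⟨z, hz, hvz⟩) hvZ

variable (G) in
/-- The vertex `v`, entered along `d₁` and left along `d₂`, does not block a path given `Z`. -/
def IsActive (Z : Set V) (d₁ : EdgeDir) (v : V) (d₂ : EdgeDir) : Prop :=
  (EdgeDir.IsCollider d₁ d₂ → v ∈ G.ancestors Z) ∧ (¬ EdgeDir.IsCollider d₁ d₂ → v ∉ Z)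

theorem isActive_of_not_isCollider {Z : Set V} {d₁ d₂ : EdgeDir} {v : V}
    (h : ¬ EdgeDir.IsCollider d₁ d₂) (hv : v ∉ Z) : G.IsActive Z d₁ v d₂ :=
  ⟨fun h' => absurd h' h, fun _ => hv⟩

theorem not_blocks_iff {Z : Set V} {p : G.GPath} :
    ¬ Blocks Z p ↔ ∀ k (_ : 0 < k) (h : k < p.dirs.length),
      G.IsActive Z p.dirs[k - 1] (p.verts[k]'(by have := p.hlen; omega)) p.dirs[k] := by
  simp only [Blocks, GPath.ColliderAt, IsActive, EdgeDir.IsCollider, ancestors,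
    List.get_eq_getElem, Set.mem_ofPred_eq]
  constructor
  · intro h k hk hlt
    refine ⟨fun hc => ?_, fun hnc hZ => h (Or.inl ⟨k, hk, hlt, fun ⟨_, _, hc⟩ => hnc hc, hZ⟩)⟩
    by_contra hnot
    push Not at hnot
    exact h (Or.inr ⟨k, hlt, ⟨hk, hlt, hc⟩, hnot.1, fun d hd hdZ => hnot.2 d hdZ hd⟩)
  · rintro h (⟨k, hk, hlt, hnc, hZ⟩ | ⟨k, hlt, ⟨hk, _, hc⟩, hZ, hdesc⟩)
    · exact (h k hk hlt).2 (fun hc => hnc ⟨hk, hlt, hc⟩) hZ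
    · rcases (h k hk hlt).1 hc with hZ' | ⟨z, hz, hd⟩
      · exact hZ hZ'
      · exact hdesc z hd hz

namespace GPath

theorem head?_verts (p : G.GPath) : p.verts.head? = some p.first := by
  simp [first, List.head?_eq_getElem?]

theorem getLast?_verts (p : G.GPath) : p.verts.getLast? = some p.last := by
  simp [last, List.getLast?_eq_getElem?, p.hlen]

theorem first_eq_of_head?_eq {p : G.GPath} {a : V} (h : p.verts.head? = some a) : p.first = a :=
  Option.some.inj (p.head?_verts ▸ h)

theorem last_eq_of_getLast?_eq {p : G.GPath} {a : V} (h : p.verts.getLast? = some a) :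
    p.last = a :=
  Option.some.inj (p.getLast?_verts ▸ h)

theorem first_mem (p : G.GPath) : p.first ∈ p.verts :=
  List.mem_of_mem_head? p.head?_verts

theorem last_mem (p : G.GPath) : p.last ∈ p.verts :=
  List.mem_of_getLast? p.getLast?_verts

def drop (p : G.GPath) (t : ℕ) (ht : t ≤ p.dirs.length) : G.GPath where
  verts := p.verts.drop t
  dirs := p.dirs.drop t
  hlen := by simp [p.hlen]; omega
  nodup := p.nodup.sublist (List.drop_sublist _ _)
  ok k h := by simpa [Nat.add_assoc] using p.ok (t + k) (by simp at h; omega)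

@[simp] theorem verts_drop (p : G.GPath) (t : ℕ) (ht : t ≤ p.dirs.length) :
    (p.drop t ht).verts = p.verts.drop t := rfl

@[simp] theorem dirs_drop (p : G.GPath) (t : ℕ) (ht : t ≤ p.dirs.length) :
    (p.drop t ht).dirs = p.dirs.drop t := rfl

theorem first_drop (p : G.GPath) (t : ℕ) (ht : t ≤ p.dirs.length) :
    (p.drop t ht).first = p.verts[t]'(by have := p.hlen; omega) :=
  first_eq_of_head?_eq (by simp [List.head?_drop])

theorem last_drop (p : G.GPath) (t : ℕ) (ht : t ≤ p.dirs.length) : (p.drop t ht).last = p.last :=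
  last_eq_of_getLast?_eq <| by
    simp [List.getLast?_drop, p.getLast?_verts, p.hlen, Nat.not_le.2 (Nat.lt_succ_of_le ht)]

theorem eq_zero_of_first_drop {p : G.GPath} {t : ℕ} {ht : t ≤ p.dirs.length}
    (h : (p.drop t ht).first = p.first) : t = 0 := by
  have hlen := p.hlen
  rw [first_drop] at h
  exact (List.Nodup.getElem_inj_iff p.nodup).1 h

theorem exists_drop_of_last_mem (p : G.GPath) {P : V → Prop} (h : ∃ v ∈ p.verts, P v) :
    ∃ t ht y s, (p.drop t ht).verts = y :: s ∧ P y ∧ ∀ v ∈ s, ¬ P v := by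
  obtain ⟨s₁, y, s₂, hpv, hy, hs₂⟩ := List.exists_split_at_last P h
  have ht : s₁.length ≤ p.dirs.length := by
    have := congrArg List.length hpv
    simp [p.hlen] at this
    omega
  exact ⟨s₁.length, ht, y, s₂, by simp [hpv], hy, hs₂⟩

def cons (p : G.GPath) (a : V) (d : EdgeDir) (h : G.StepOK d a p.first) (ha : a ∉ p.verts) :
    G.GPath where
  verts := a :: p.verts
  dirs := d :: p.dirs
  hlen := by simp [p.hlen]
  nodup := List.nodup_cons.2 ⟨ha, p.nodup⟩
  ok
    | 0, _ => by simpa [first] using h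
    | k + 1, h => by simpa using p.ok k (by simpa using h)

/-- Every edge along which `p` leaves `w` has an arrowhead at `w`. -/
def LeavesInto (p : G.GPath) (w : V) : Prop :=
  ∀ k (h : k < p.dirs.length), p.verts[k]'(by have := p.hlen; omega) = w →
    p.dirs[k] = .bwd ∨ p.dirs[k] = .bi

theorem LeavesInto.drop {p : G.GPath} {w : V} (hp : p.LeavesInto w) (t : ℕ)
    (ht : t ≤ p.dirs.length) : (p.drop t ht).LeavesInto w := fun k h hk => by
  simp only [dirs_drop, List.length_drop] at h
  simpa using hp (t + k) (by omega) (by simpa using hk)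

end GPath

theorem not_blocks_drop_iff {Z : Set V} {p : G.GPath} {t : ℕ} (ht : t ≤ p.dirs.length) :
    ¬ Blocks Z (p.drop t ht) ↔ ∀ k, t < k → ∀ h : k < p.dirs.length,
      G.IsActive Z p.dirs[k - 1] (p.verts[k]'(by have := p.hlen; omega)) p.dirs[k] := by
  rw [not_blocks_iff]
  constructor
  · intro H k htk hk
    simpa [show t + (k - t - 1) = k - 1 by omega, show t + (k - t) = k by omega]
      using H (k - t) (by omega) (by simp; omega)
  · intro H k hk hlt
    simp only [GPath.dirs_drop, List.length_drop] at hlt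
    simpa [show t + (k - 1) = t + k - 1 by omega] using H (t + k) (by omega) (by omega)

theorem not_blocks_drop {Z : Set V} {p : G.GPath} (hp : ¬ Blocks Z p) (t : ℕ)
    (ht : t ≤ p.dirs.length) : ¬ Blocks Z (p.drop t ht) :=
  (not_blocks_drop_iff ht).2 fun k _ h => not_blocks_iff.1 hp k (by omega) h

theorem Blocks.exists_last_inactive {Z : Set V} {p : G.GPath} (hp : Blocks Z p) :
    ∃ t, ∃ (_ : 0 < t) (ht : t < p.dirs.length),
      ¬ G.IsActive Z p.dirs[t - 1] (p.verts[t]'(by have := p.hlen; omega)) p.dirs[t] ∧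
      ¬ Blocks Z (p.drop t ht.le) := by
  have hlen := p.hlen
  let Inactive : ℕ → Prop := fun t => ∃ (_ : 0 < t) (ht : t < p.dirs.length),
    ¬ G.IsActive Z p.dirs[t - 1] p.verts[t] p.dirs[t]
  obtain ⟨k, hk⟩ : ∃ k, Inactive k := by
    by_contra h
    push Not at h
    exact not_blocks_iff.2 (fun k hk hlt => by_contra fun hn => h k ⟨hk, hlt, hn⟩) hp
  obtain ⟨ht0, ht, hinact⟩ := Nat.findGreatest_spec hk.2.1.le hk
  refine ⟨_, ht0, ht, hinact, (not_blocks_drop_iff ht.le).2 fun s hts hs => ?_⟩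
  by_contra hn
  exact Nat.findGreatest_is_greatest hts hs.le ⟨by omega, hs, hn⟩

theorem not_blocks_cons {Z : Set V} {p : G.GPath} {a : V} {d : EdgeDir}
    (h : G.StepOK d a p.first) (ha : a ∉ p.verts) (hp : ¬ Blocks Z p)
    (hjoin : ∀ h : 0 < p.dirs.length, G.IsActive Z d p.first p.dirs[0]) :
    ¬ Blocks Z (p.cons a d h ha) := by
  rw [not_blocks_iff] at hp ⊢
  rintro (_ | _ | k) hk hlt
  · omega
  · simpa [GPath.cons, GPath.first] using hjoin (by simpa [GPath.cons] using hlt)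
  · simpa [GPath.cons] using hp (k + 1) (by omega) (by simpa [GPath.cons] using hlt)

namespace GPath.IsDirected

variable {p : G.GPath} {a b : V}

theorem getElem_dirs (hp : p.IsDirected a b) {k : ℕ} (h : k < p.dirs.length) :
    p.dirs[k] = .fwd :=
  hp.2.2.2 k h

theorem isChain (hp : p.IsDirected a b) : p.verts.IsChain G.dir := by
  have hlen := p.hlen
  refine List.isChain_iff_getElem.2 fun k hk => ?_
  simpa [hp.getElem_dirs (k := k) (by omega), StepOK] using p.ok k (by omega)

theorem not_mem_of_not_blocks {T : Set V} {v : V} (hp : p.IsDirected a b) (hT : ¬ Blocks T p)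
    (hv : v ∈ p.verts) (ha : v ≠ a) (hb : v ≠ b) : v ∉ T := by
  have hlen := p.hlen
  obtain ⟨k, hk, rfl⟩ := List.getElem_of_mem hv
  have hk0 : 0 < k := Nat.pos_of_ne_zero fun h => ha (by simp [← hp.1, GPath.first, h])
  have hkd : k < p.dirs.length := by
    by_contra hge
    exact hb (by simp [← hp.2.1, GPath.last, show k = p.dirs.length by omega])
  refine (not_blocks_iff.1 hT k hk0 hkd).2 ?_
  simp [EdgeDir.IsCollider, hp.getElem_dirs hkd]

theorem exists_prefix_to {S : Set V} (hp : p.IsDirected a b) (hb : b ∈ S) :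
    ∃ A w, (A ++ [w]).IsChain G.dir ∧ (A ++ [w]).Nodup ∧ (A ++ [w]).head? = some a ∧ w ∈ S ∧
      (∀ v ∈ A, v ∉ S) ∧ ∀ v ∈ A ++ [w], v ∈ p.verts := by
  obtain ⟨A, w, R, hpv, hwS, hAS⟩ :=
    List.exists_split_at_first (· ∈ S) (l := p.verts) ⟨b, hp.2.1 ▸ p.last_mem, hb⟩
  have hpv' : p.verts = (A ++ [w]) ++ R := by simp [hpv]
  refine ⟨A, w, ?_, ?_, ?_, hwS, hAS, fun v hv => hpv' ▸ List.mem_append_left _ hv⟩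
  · exact (hpv' ▸ hp.isChain).left_of_append
  · exact (hpv' ▸ p.nodup).sublist (List.sublist_append_left _ _)
  · simpa [hpv, hp.1] using p.head?_verts

end GPath.IsDirected

theorem exists_prepend_chain {Z : Set V} {d : EdgeDir} (hd : d ≠ .bi) :
    ∀ (m : List V) (σ : G.GPath), (σ.first :: m).IsChain (fun x y => G.StepOK d y x) →
      (m ++ σ.verts).Nodup → (∀ v ∈ m, v ∉ Z) →
      (∀ h : 0 < σ.dirs.length, G.IsActive Z d σ.first σ.dirs[0]) → ¬ Blocks Z σ →
      ∃ τ : G.GPath, τ.verts = m.reverse ++ σ.verts ∧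
        τ.dirs = List.replicate m.length d ++ σ.dirs ∧ ¬ Blocks Z τ
  | [], σ, _, _, _, _, hσ => ⟨σ, rfl, rfl, hσ⟩
  | a :: m, σ, hchain, hnodup, hZ, hjoin, hσ => by
    rw [List.isChain_cons_cons] at hchain
    have ha : a ∉ σ.verts := fun h => (List.nodup_cons.1 hnodup).1 (by simp [h])
    obtain ⟨τ, hverts, hdirs, hτ⟩ := exists_prepend_chain hd m (σ.cons a d hchain.1 ha) hchain.2
      (List.nodup_middle.2 hnodup) (fun v hv => hZ v (by simp [hv]))
      (fun _ => isActive_of_not_isCollider (EdgeDir.not_isCollider_self hd) (hZ a (by simp)))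
      (not_blocks_cons hchain.1 ha hσ hjoin)
    refine ⟨τ, by simpa [GPath.cons] using hverts, ?_, hτ⟩
    simpa [GPath.cons, List.replicate_succ'] using hdirs

theorem exists_backdoor_of_mem {Z : Set V} {σ : G.GPath} {w : V} (hσ : ¬ Blocks Z σ)
    (hw : w ∈ σ.verts) (hwl : w ≠ σ.last) (hinto : σ.LeavesInto w) :
    ∃ τ : G.GPath, τ.IsBackdoor w σ.last ∧ ¬ Blocks Z τ := by
  have hlen := σ.hlen
  obtain ⟨k, hk, rfl⟩ := List.getElem_of_mem hw
  have hkd : k < σ.dirs.length := by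
    by_contra hge
    exact hwl (by simp [GPath.last, show k = σ.dirs.length by omega])
  exact ⟨σ.drop k hkd.le, ⟨σ.first_drop _ _, σ.last_drop _ _, by simpa using hkd,
    by simpa using hinto k hkd rfl⟩, not_blocks_drop hσ _ _⟩

/-- Cut `σ` at its last vertex `y` on the chain and walk the chain from `y` back to `w`. -/
theorem exists_backdoor_of_chain_meeting {Z : Set V} {σ : G.GPath} {L : List V} {w : V}
    (hchain : (L ++ [w]).IsChain G.dir) (hnodup : (L ++ [w]).Nodup)
    (hZ : ∀ v ∈ L ++ [w], v ∉ Z) (hmeet : ∃ v ∈ L, v ∈ σ.verts) (hw : w ∉ σ.verts)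
    (hσ : ¬ Blocks Z σ) : ∃ τ : G.GPath, τ.IsBackdoor w σ.last ∧ ¬ Blocks Z τ := by
  obtain ⟨t, ht, y, s, hσ'v, hyL, hs⟩ :=
    σ.exists_drop_of_last_mem (P := (· ∈ L)) (by simpa [and_comm] using hmeet)
  set σ' := σ.drop t ht
  have hσ'f : σ'.first = y := GPath.first_eq_of_head?_eq (by simp [hσ'v])
  obtain ⟨L₁, L₂, rfl⟩ := List.append_of_mem hyL
  have hchain' : (y :: (L₂ ++ [w])).IsChain G.dir :=
    (show (L₁ ++ y :: (L₂ ++ [w])).IsChain G.dir by simpa using hchain).right_of_append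
  have hnodup' : (L₂ ++ [w] ++ σ'.verts).Nodup := by
    have hσ'nd := σ'.nodup
    have hwσ' : w ∉ σ'.verts := fun h => hw (List.mem_of_mem_drop h)
    rw [hσ'v] at hσ'nd hwσ' ⊢
    simp only [List.nodup_append, List.nodup_cons, List.mem_append, List.mem_cons] at *
    grind
  obtain ⟨τ, hτv, hτd, hτ⟩ := exists_prepend_chain (d := .bwd) (by decide) (L₂ ++ [w]) σ'
    (hσ'f ▸ hchain') hnodup' (fun v hv => hZ v (by simp_all))
    (fun _ => isActive_of_not_isCollider (EdgeDir.not_isCollider_bwd_left _)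
      (hσ'f ▸ hZ y (by simp)))
    (not_blocks_drop hσ _ _)
  refine ⟨τ, ⟨GPath.first_eq_of_head?_eq (by simp [hτv]), GPath.last_eq_of_getLast?_eq ?_,
    by simp [hτd], Or.inl (by simp [hτd])⟩, hτ⟩
  rw [hτv, List.getLast?_append_of_ne_nil _ (by simp [hσ'v]), σ'.getLast?_verts, σ.last_drop]

theorem exists_backdoor_of_ancestor_first {Z : Set V} {σ : G.GPath} {w : V} (hσ : ¬ Blocks Z σ)
    (hw : Relation.ReflTransGen G.dir σ.first w) (hfirst : σ.first ∉ G.ancestors Z)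
    (hwl : w ≠ σ.last) (hinto : σ.LeavesInto w) :
    ∃ τ : G.GPath, τ.IsBackdoor w σ.last ∧ ¬ Blocks Z τ := by
  by_cases hwσ : w ∈ σ.verts
  · exact exists_backdoor_of_mem hσ hwσ hwl hinto
  obtain ⟨L, hchain, hnodup, hlast⟩ := List.exists_nodup_isChain_of_reflTransGen hw
  obtain ⟨L', hL'⟩ := List.getLast?_eq_some_iff.1 hlast
  have hfirstL : σ.first ∈ L' ++ [w] := hL' ▸ List.mem_cons_self
  rw [hL'] at hchain hnodup
  have hZ : ∀ v ∈ L' ++ [w], v ∉ Z := fun v hv hvZ =>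
    hchain.induction (· ∉ G.ancestors Z) _
      (fun _ _ hxy hx hy => hx (mem_ancestors_of_reflTransGen (.single hxy) hy))
      (fun _ => by simpa [← hL'] using hfirst) v hv (Or.inl hvZ)
  refine exists_backdoor_of_chain_meeting hchain hnodup hZ ⟨σ.first, ?_, σ.first_mem⟩ hwσ hσ
  rcases List.mem_append.1 hfirstL with h | h
  · exact h
  · exact absurd (List.mem_singleton.1 h ▸ σ.first_mem) hwσ

/-- Cut `π` at its last vertex `y` on the chain `B` and walk `B` from its head `l` forward to
`y`. -/
theorem exists_open_path_of_ancestor {Z : Set V} {π : G.GPath} {B : List V} {l u i : V}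
    (hchain : B.IsChain G.dir) (hnodup : B.Nodup) (hl : B.head? = some l)
    (hu : B.getLast? = some u) (hBZ : ∀ v ∈ B, v ∈ Z → v = u) (huZ : u ∈ Z)
    (hπ : π.IsBackdoor u i) (hπZ : ¬ Blocks Z π) :
    ∃ τ : G.GPath, τ.first = l ∧ τ.last = i ∧ ¬ Blocks Z τ ∧
      ∀ v ∈ τ.verts, v ∈ B ∨ v ∈ π.verts := by
  obtain ⟨hπu, hπi, _, hπbd⟩ := hπ
  obtain ⟨t, ht, y, s, hσv, hyB, hs⟩ := π.exists_drop_of_last_mem (P := (· ∈ B))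
    ⟨u, hπu ▸ π.first_mem, List.mem_of_getLast? hu⟩
  set σ := π.drop t ht
  have hσf : σ.first = y := GPath.first_eq_of_head?_eq (by simp [hσv])
  obtain ⟨B₁, B₂, rfl⟩ := List.append_of_mem hyB
  have hchain' : (y :: B₁.reverse).IsChain (fun x y => G.StepOK .fwd y x) := by
    rw [← List.reverse_concat', List.isChain_reverse]
    exact (show ((B₁ ++ [y]) ++ B₂).IsChain G.dir by simpa using hchain).left_of_append
  have huB₂ : u ∈ y :: B₂ := List.mem_of_getLast? (by rwa [List.getLast?_append_cons] at hu)
  have hnodup' : (B₁.reverse ++ σ.verts).Nodup := by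
    have hσnd := σ.nodup
    rw [hσv] at hσnd ⊢
    simp only [List.nodup_append, List.nodup_cons, List.nodup_reverse, List.mem_append,
      List.mem_cons, List.mem_reverse] at *
    grind
  have hB₁Z : ∀ v ∈ B₁.reverse, v ∉ Z := by
    intro v hv hvZ
    obtain rfl := hBZ v (by simp_all) hvZ
    simp only [List.nodup_append, List.mem_reverse] at hnodup hv
    exact hnodup.2.2 v hv v huB₂ rfl
  have hjoin : ∀ h : 0 < σ.dirs.length, G.IsActive Z .fwd σ.first σ.dirs[0] := by
    refine fun h => ⟨fun _ => mem_ancestors_of_reflTransGen ?_ (Or.inl huZ), fun hnc hyZ => hnc ?_⟩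
    · rw [hσf]
      refine List.relationReflTransGen_of_exists_isChain_cons B₂ hchain.right_of_append ?_
      rw [List.getLast?_append_cons, List.getLast?_eq_some_getLast (List.cons_ne_nil _ _)] at hu
      exact Option.some.inj hu
    · obtain rfl := hBZ y hyB (hσf ▸ hyZ)
      obtain rfl := π.eq_zero_of_first_drop (hσf.trans hπu.symm)
      simpa [σ, EdgeDir.IsCollider] using hπbd
  obtain ⟨τ, hτv, -, hτ⟩ := exists_prepend_chain (d := .fwd) (by decide) B₁.reverse σ
    (hσf ▸ hchain') hnodup' hB₁Z hjoin (not_blocks_drop hπZ _ _)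
  refine ⟨τ, GPath.first_eq_of_head?_eq ?_, GPath.last_eq_of_getLast?_eq ?_, hτ, ?_⟩
  · simpa [hτv, hσv] using hl
  · rw [hτv, List.getLast?_append_of_ne_nil _ (by simp [hσv]), σ.getLast?_verts, π.last_drop,
      hπi]
  · intro v hv
    rw [hτv, List.reverse_reverse, List.mem_append] at hv
    exact hv.imp (List.mem_append_left _) List.mem_of_mem_drop

theorem exists_backdoor_of_trek_of_not_blocks {Z : Set V} {π : G.GPath} {u w l i : V}
    {A B : List V} (hπ : π.IsBackdoor u i) (hπZ : ¬ Blocks Z π) (hinto : π.LeavesInto w)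
    (hwi : w ≠ i) (huZ : u ∈ Z) (hwu : w ≠ u)
    (hA : (A ++ [w]).IsChain G.dir) (hAnd : (A ++ [w]).Nodup) (hlA : l ∈ A)
    (hAZ : ∀ v ∈ A ++ [w], v ∉ Z)
    (hB : (B ++ [u]).IsChain G.dir) (hBnd : (B ++ [u]).Nodup) (hlB : (B ++ [u]).head? = some l)
    (hBZ : ∀ v ∈ B, v ∉ Z) (hwB : w ∉ B) :
    ∃ σ : G.GPath, σ.IsBackdoor w i ∧ ¬ Blocks Z σ := by
  by_cases hwπ : w ∈ π.verts
  · exact hπ.2.1 ▸ exists_backdoor_of_mem hπZ hwπ (hπ.2.1 ▸ hwi) hinto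
  obtain ⟨τ, hτl, hτi, hτ, hτv⟩ := exists_open_path_of_ancestor hB hBnd hlB List.getLast?_concat
    (fun v hv hvZ => by simpa using (List.mem_append.1 hv).resolve_left fun hvB => hBZ v hvB hvZ)
    huZ hπ hπZ
  have hwτ : w ∉ τ.verts := fun h => by
    rcases hτv w h with h | h
    · simp only [List.mem_append, List.mem_singleton] at h
      tauto
    · exact hwπ h
  exact hτi ▸ exists_backdoor_of_chain_meeting hA hAnd hAZ ⟨l, hlA, hτl ▸ τ.first_mem⟩ hwτ hτ

theorem not_mem_of_not_isCollider {S : Set V} {π : G.GPath} {u : V} (hπu : π.first = u)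
    (hπS : ¬ Blocks (S \ {u}) π) {k : ℕ} (hk : 0 < k) (h : k < π.dirs.length)
    (hnc : ¬ EdgeDir.IsCollider π.dirs[k - 1] π.dirs[k]) :
    π.verts[k]'(by have := π.hlen; omega) ∉ S := by
  have hlen := π.hlen
  refine fun hS => (not_blocks_iff.1 hπS k hk h).2 hnc ⟨hS, fun hu => ?_⟩
  have h0 : π.verts[0] = u := hπu
  have := (List.Nodup.getElem_inj_iff π.nodup).1 (hu.trans h0.symm)
  omega

theorem exists_backdoor_of_trek {S : Set V} {π : G.GPath} {u w l i : V} {A B : List V}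
    (hπ : π.IsBackdoor u i) (hπS : ¬ Blocks (S \ {u}) π) (huS : u ∈ S) (hwS : w ∈ S)
    (hwu : w ≠ u) (hiS : i ∉ S) (hlS : l ∉ S)
    (hA : (A ++ [w]).IsChain G.dir) (hAnd : (A ++ [w]).Nodup) (hlA : (A ++ [w]).head? = some l)
    (hAS : ∀ v ∈ A, v ∉ S)
    (hB : (B ++ [u]).IsChain G.dir) (hBnd : (B ++ [u]).Nodup) (hlB : (B ++ [u]).head? = some l)
    (hBS : ∀ v ∈ B, v ∉ S) (hwB : w ∉ B) :
    ∃ σ : G.GPath, σ.IsBackdoor w i ∧ ¬ Blocks (S \ {w}) σ := by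
  have hlen := π.hlen
  have hπu : π.first = u := hπ.1
  have hπi : π.last = i := hπ.2.1
  have hwi : w ≠ i := fun h => hiS (h ▸ hwS)
  have hinto : π.LeavesInto w := by
    intro k h hk
    rcases Nat.eq_zero_or_pos k with rfl | hk0
    · exact absurd (hk.symm.trans hπu) hwu
    · by_contra hcon
      exact not_mem_of_not_isCollider hπu hπS hk0 h (fun hc => hcon hc.2) (hk ▸ hwS)
  by_cases hπZ : Blocks (S \ {w}) π
  -- the last vertex blocking `π` given `S \ {w}` is a collider reaching `S \ {u}` only via `w`
  · obtain ⟨t, ht0, ht, hinact, hσ⟩ := hπZ.exists_last_inactive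
    have hcoll : EdgeDir.IsCollider π.dirs[t - 1] π.dirs[t] := by_contra fun hnc =>
      hinact (isActive_of_not_isCollider hnc fun hZ =>
        not_mem_of_not_isCollider hπu hπS ht0 ht hnc hZ.1)
    have hnotAn : π.verts[t] ∉ G.ancestors (S \ {w}) := fun hAn =>
      hinact ⟨fun _ => hAn, fun hnc => absurd hcoll hnc⟩
    have hwt : Relation.ReflTransGen G.dir π.verts[t] w :=
      reflTransGen_of_mem_ancestors (Y := S \ {u}) (by grind)
        ((not_blocks_iff.1 hπS t ht0 ht).1 hcoll) hnotAn
    rw [← hπi, ← π.last_drop t ht.le]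
    exact exists_backdoor_of_ancestor_first hσ (π.first_drop t _ ▸ hwt)
      (π.first_drop t _ ▸ hnotAn) (π.last_drop t _ ▸ hπi ▸ hwi) (hinto.drop _ _)
  · have hlA' : l ∈ A := (List.mem_append.1 (List.mem_of_mem_head? hlA)).resolve_right
      fun h => hlS (List.mem_singleton.1 h ▸ hwS)
    refine exists_backdoor_of_trek_of_not_blocks hπ hπZ hinto hwi ⟨huS, hwu.symm⟩ hwu hA hAnd hlA'
      (fun v hv hvZ => ?_) hB hBnd hlB (fun v hv hvZ => hBS v hv hvZ.1) hwB
    rcases List.mem_append.1 hv with hv | hv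
    · exact hAS v hv hvZ.1
    · exact hvZ.2 (List.mem_singleton.1 hv)

end ADMG

open ADMG in
/-- treks out of a common source `l ∉ S` connecting `S₂` to `S₁`, with the
branch to `S₂` unblocked by `S₁` and the branch to `S₁` unblocked by `S₂`, are
impossible. -/
theorem no_trek_from_S2_to_S1 {V : Type} (G : ADMG V) (i : V) (S : Set V) (hiS : i ∉ S)
    (S₁ S₂ : Set V)
    (hS₁ : S₁ = {k ∈ S | ∃ p : G.GPath, p.IsBackdoor k i ∧ ¬ Blocks (S \ {k}) p})
    (hS₂ : S₂ = S \ S₁)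
    (xp xq : V) (hp : xp ∈ S₁) (hq : xq ∈ S₂) :
    ¬ ∃ (l : V) (p₁ p₂ : G.GPath), l ∉ S ∧
        p₁.IsDirected l xq ∧ ¬ Blocks S₁ p₁ ∧
        p₂.IsDirected l xp ∧ ¬ Blocks S₂ p₂ ∧
        (∀ v, v ∈ p₁.verts → v ∈ p₂.verts → v = l) := by
  rintro ⟨l, p₁, p₂, hlS, hp₁, hp₁S₁, hp₂, hp₂S₂, hmeet⟩
  obtain ⟨A, w, hA, hAnd, hlA, hwS, hAS, hAp₁⟩ := hp₁.exists_prefix_to (hS₂ ▸ hq).1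
  obtain ⟨B, u, hB, hBnd, hlB, huS, hBS, hBp₂⟩ := hp₂.exists_prefix_to (hS₁ ▸ hp).1
  have hwp₁ : w ∈ p₁.verts := hAp₁ w (by simp)
  have hup₂ : u ∈ p₂.verts := hBp₂ u (by simp)
  have hwl : w ≠ l := fun h => hlS (h ▸ hwS)
  have hul : u ≠ l := fun h => hlS (h ▸ huS)
  have hwS₁ : w ∉ S₁ := by
    by_cases hwq : w = xq
    · exact hwq ▸ (hS₂ ▸ hq).2
    · exact hp₁.not_mem_of_not_blocks hp₁S₁ hwp₁ hwl hwq
  have huS₁ : u ∈ S₁ := by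
    by_cases hup : u = xp
    · exact hup ▸ hp
    · by_contra hu
      exact hp₂.not_mem_of_not_blocks hp₂S₂ hup₂ hul hup (hS₂ ▸ ⟨huS, hu⟩)
  rw [hS₁] at hwS₁ huS₁
  obtain ⟨-, π, hπ, hπS⟩ := huS₁
  exact hwS₁ ⟨hwS, exists_backdoor_of_trek hπ hπS huS hwS
    (fun h => hwl (hmeet w hwp₁ (h ▸ hup₂))) hiS hlS hA hAnd hlA hAS hB hBnd hlB hBS
    (fun h => hwl (hmeet w hwp₁ (hBp₂ w (by simp [h]))))⟩
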